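/- arXiv:2206.14454 — 2 statements merged into one kernel-verified Lean document; each statement's English description precedes it below -/
import Mathlib

section
/- Let μ be a positive Borel measure on 𝔻 such that S_μ is compact on H², let (I_n)_{n≥1} be an enumeration of the dyadic arcs such that (μ(W(I_n))/|I_n|)_{n≥1} is nonincreasing, and let (z_n)_{n≥1} be points with z_n ∈ R(I_n). Fix n ≥ 1 and set μ_n = Σ_{k≥n} μ(R(I_k)) δ_{z_k}. Then sup_{j≥1} μ_n(W(I_j))/|I_j| ≤ τ_n(μ) = μ(W(I_n))/|I_n|. -/
open MeasureTheory Complex Set Filter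

noncomputable section

/-- The open unit disc `𝔻` in `ℂ`. -/
def unitDisc : Set ℂ := Metric.ball 0 1

/-- The normalized area (Lebesgue) measure `m` on `ℂ` (so that `m(𝔻) = 1`). -/
def mA : Measure ℂ := (ENNReal.ofReal Real.pi)⁻¹ • (volume : Measure ℂ)

/-- `z/|z|` belongs to the dyadic arc `I_{n,k} = {e^{iθ} : 2πk/2ⁿ ≤ θ < 2π(k+1)/2ⁿ}`. -/
def onArc (n k : ℕ) (z : ℂ) : Prop :=
  ∃ θ : ℝ, 2 * Real.pi * k / 2 ^ n ≤ θ ∧ θ < 2 * Real.pi * (k + 1) / 2 ^ n ∧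
    z = (‖z‖ : ℂ) * Complex.exp (θ * Complex.I)

/-- The Carleson window `W(I_{n,k})` (note `|I_{n,k}|/2π = 2⁻ⁿ`). -/
def Wwin (n k : ℕ) : Set ℂ :=
  {z | z ∈ unitDisc ∧ 1 - ‖z‖ ≤ (1 / 2 : ℝ) ^ n ∧ onArc n k z}

/-- The inner half `R(I_{n,k})` of the Carleson window. -/
def Rwin (n k : ℕ) : Set ℂ :=
  {z | z ∈ unitDisc ∧ (1 / 2 : ℝ) ^ n / 2 < 1 - ‖z‖ ∧
    1 - ‖z‖ ≤ (1 / 2 : ℝ) ^ n ∧ onArc n k z}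

/-- The arclength `|I_{n,k}| = 2π/2ⁿ` of a dyadic arc of generation `n`. -/
def arcLen (n : ℕ) : ℝ := 2 * Real.pi / 2 ^ n

/-- The index set of the dyadic arcs: `n ≥ 1`, `1 ≤ k ≤ 2ⁿ`. -/
def dyadicSet : Set (ℕ × ℕ) := {p | 1 ≤ p.1 ∧ 1 ≤ p.2 ∧ p.2 ≤ 2 ^ p.1}

/-- The `n`-th singular value (`n ≥ 1`) of an operator, defined as the `n`-th approximation
number `s_n(T) = inf {‖T - F‖ : rank F < n}`; for a compact operator between Hilbert spaces
this coincides with the `n`-th singular value (nonincreasing ordering). -/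
def sValue {H K : Type} [NormedAddCommGroup H] [NormedSpace ℂ H]
    [NormedAddCommGroup K] [NormedSpace ℂ K] (T : H →L[ℂ] K) (n : ℕ) : ℝ :=
  sInf {c : ℝ | ∃ F : H →L[ℂ] K,
    (∃ s : Finset K, s.card < n ∧
      LinearMap.range (F : H →ₗ[ℂ] K) ≤ Submodule.span ℂ (s : Set K)) ∧ c = ‖T - F‖}

/-- The set function `m_g(S) = ∫_S |g'(z)|²(1-|z|²)² dm(z)`. -/
def mgMeas (g : ℂ → ℂ) (S : Set ℂ) : ℝ :=
  ∫ z in S, ‖deriv g z‖ ^ 2 * (1 - ‖z‖ ^ 2) ^ 2 ∂mA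

/-- The set function `ν_g(S) = ∫_S |g'(z)|²(1-|z|²) dm(z)`. -/
def nuMeas (g : ℂ → ℂ) (S : Set ℂ) : ℝ :=
  ∫ z in S, ‖deriv g z‖ ^ 2 * (1 - ‖z‖ ^ 2) ∂mA

/-- The mean of `|F|²` on the circle of radius `r`. -/
def circleAvgSq (F : ℂ → ℂ) (r : ℝ) : ℝ :=
  (2 * Real.pi)⁻¹ *
    ∫ θ in (0:ℝ)..(2 * Real.pi), ‖F ((r : ℂ) * Complex.exp (θ * Complex.I))‖ ^ 2

/-- Membership in the Hardy space `H²`: analytic on `𝔻` with bounded circle means of `|F|²`. -/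
def memH2 (F : ℂ → ℂ) : Prop :=
  DifferentiableOn ℂ F unitDisc ∧
    BddAbove (Set.range fun r : Set.Ioo (0:ℝ) 1 => circleAvgSq F (r : ℝ))

/-- The `H²` norm squared: `sup_{0<r<1}` of the circle means of `|F|²`. -/
def hardyNormSq (F : ℂ → ℂ) : ℝ := ⨆ r : Set.Ioo (0:ℝ) 1, circleAvgSq F (r : ℝ)

/-- The Möbius automorphism `φ_w(z) = (w - z)/(1 - w̄ z)` of the unit disc. -/
def moebius (w z : ℂ) : ℂ := (w - z) / (1 - (starRingEnd ℂ) w * z)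

/-- `g ∈ VMOA`: `g ∈ H²` and `‖g ∘ φ_w‖_{H²} → 0` as `|w| → 1⁻`. -/
def memVMOA (g : ℂ → ℂ) : Prop :=
  memH2 g ∧ ∀ ε : ℝ, 0 < ε → ∃ ρ ∈ Set.Ioo (0:ℝ) 1, ∀ w ∈ unitDisc,
    ρ < ‖w‖ → hardyNormSq (fun z => g (moebius w z)) < ε

/-- `g` belongs to the little Bloch space `𝓑₀`. -/
def littleBloch (g : ℂ → ℂ) : Prop :=
  DifferentiableOn ℂ g unitDisc ∧ ∀ ε : ℝ, 0 < ε → ∃ ρ ∈ Set.Ioo (0:ℝ) 1, ∀ z ∈ unitDisc,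
    ρ < ‖z‖ → (1 - ‖z‖ ^ 2) * ‖deriv g z‖ < ε


/-!
If `z_k ∈ R(I_k)` lies in `W(I_j)`, then `I_k ⊆ I_j`, and the sets `R(I_k)` are pairwise disjoint,
so `μ_n(W(I_j))` is at most the `μ`-measure of the union of the `R(I_k)`, `k ≥ n`, with
`I_k ⊆ I_j`. Each such `R(I_k)` lies in `W(I)` for a maximal arc `I` among these `I_k`. The maximal
arcs are pairwise disjoint subarcs of `I_j`, and each has index `≥ n`, so `μ(W(I)) ≤ τ_n |I|` by
monotonicity; summing gives `μ_n(W(I_j)) ≤ τ_n |I_j|`.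

Arcs are handled through the parameter `argParam z = arg z / 2π mod 1 ∈ [0, 1)`, under which
dyadic arcs become dyadic intervals `[a/2ⁿ, (a+1)/2ⁿ)`.
-/

open Function
open scoped ENNReal

def dyadicIco (g a : ℕ) : Set ℝ := Ico (a / 2 ^ g) ((a + 1) / 2 ^ g)

theorem mem_dyadicIco_iff {g a : ℕ} {t : ℝ} (ht : 0 ≤ t) :
    t ∈ dyadicIco g a ↔ ⌊t * 2 ^ g⌋₊ = a := by
  rw [Nat.floor_eq_iff (by positivity), dyadicIco, mem_Ico, div_le_iff₀ (by positivity),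
    lt_div_iff₀ (by positivity)]

theorem nonneg_of_mem_dyadicIco {g a : ℕ} {t : ℝ} (ht : t ∈ dyadicIco g a) : 0 ≤ t :=
  le_trans (by positivity) ht.1

theorem left_mem_dyadicIco (g a : ℕ) : (a / 2 ^ g : ℝ) ∈ dyadicIco g a :=
  left_mem_Ico.2 (by gcongr; linarith)

theorem volume_dyadicIco (g a : ℕ) : volume (dyadicIco g a) = ENNReal.ofReal (1 / 2 ^ g) := by
  rw [dyadicIco, Real.volume_Ico, ← sub_div, add_sub_cancel_left]

theorem dyadicIco_subset_Ico_zero_one {g a : ℕ} (ha : a < 2 ^ g) : dyadicIco g a ⊆ Ico 0 1 := by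
  have ha' : (a : ℝ) + 1 ≤ 2 ^ g := by exact_mod_cast ha
  exact Ico_subset_Ico (by positivity) ((div_le_one (by positivity)).2 ha')

theorem mem_dyadicIco_add_mul_iff {g a q : ℕ} {x : ℝ} :
    x ∈ dyadicIco g (a + 2 ^ g * q) ↔ x - q ∈ dyadicIco g a := by
  have h : (0 : ℝ) < 2 ^ g := by positivity
  simp only [dyadicIco, mem_Ico, div_le_iff₀ h, lt_div_iff₀ h, sub_mul]
  push_cast
  constructor <;> rintro ⟨h1, h2⟩ <;> constructor <;> linarith

theorem floor_mul_two_pow_of_le {g h : ℕ} (hhg : h ≤ g) (t : ℝ) :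
    ⌊t * 2 ^ h⌋₊ = ⌊t * 2 ^ g⌋₊ / 2 ^ (g - h) := by
  have h2 : t * 2 ^ h = t * 2 ^ g / ((2 ^ (g - h) : ℕ) : ℝ) := by
    rw [Nat.cast_pow, Nat.cast_ofNat, eq_div_iff (by positivity), mul_assoc, ← pow_add,
      Nat.add_sub_cancel' hhg]
  rw [h2, Nat.floor_div_natCast]

theorem dyadicIco_subset_of_le {g h a b : ℕ} (hhg : h ≤ g)
    (hne : (dyadicIco g a ∩ dyadicIco h b).Nonempty) : dyadicIco g a ⊆ dyadicIco h b := by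
  obtain ⟨t, hta, htb⟩ := hne
  have ht := nonneg_of_mem_dyadicIco hta
  intro s hs
  have hs0 := nonneg_of_mem_dyadicIco hs
  rw [mem_dyadicIco_iff ht] at hta htb
  rw [mem_dyadicIco_iff hs0] at hs
  rw [mem_dyadicIco_iff hs0, floor_mul_two_pow_of_le hhg s, hs, ← hta,
    ← floor_mul_two_pow_of_le hhg t, htb]

theorem le_of_dyadicIco_subset {g h a b : ℕ} (hsub : dyadicIco g a ⊆ dyadicIco h b) : h ≤ g := by
  have hvol := measure_mono (μ := volume) hsub
  rw [volume_dyadicIco, volume_dyadicIco, ENNReal.ofReal_le_ofReal_iff (by positivity),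
    one_div_le_one_div (by positivity) (by positivity)] at hvol
  exact (pow_le_pow_iff_right₀ one_lt_two).1 hvol

theorem dyadicIco_inj {g h a b : ℕ} : dyadicIco g a = dyadicIco h b ↔ g = h ∧ a = b := by
  refine ⟨fun hab => ?_, fun ⟨rfl, rfl⟩ => rfl⟩
  obtain rfl : g = h := le_antisymm (le_of_dyadicIco_subset hab.ge) (le_of_dyadicIco_subset hab.le)
  have ha := left_mem_dyadicIco g a
  rw [hab, mem_dyadicIco_iff (by positivity), div_mul_cancel₀ _ (by positivity),
    Nat.floor_natCast] at ha
  exact ⟨rfl, ha⟩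

def dyadicIntervals : Set (Set ℝ) := {I | ∃ g a, dyadicIco g a = I}

theorem subset_or_subset_or_disjoint_of_mem_dyadicIntervals {I J : Set ℝ}
    (hI : I ∈ dyadicIntervals) (hJ : J ∈ dyadicIntervals) : I ⊆ J ∨ J ⊆ I ∨ Disjoint I J := by
  obtain ⟨g, a, rfl⟩ := hI
  obtain ⟨h, b, rfl⟩ := hJ
  by_cases hd : Disjoint (dyadicIco g a) (dyadicIco h b)
  · exact Or.inr (Or.inr hd)
  rw [not_disjoint_iff_nonempty_inter] at hd
  rcases le_total h g with hhg | hgh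
  · exact Or.inl (dyadicIco_subset_of_le hhg hd)
  · exact Or.inr (Or.inl (dyadicIco_subset_of_le hgh (inter_comm _ _ ▸ hd)))

theorem finite_dyadicIntervals_superset (g a : ℕ) :
    {J ∈ dyadicIntervals | dyadicIco g a ⊆ J}.Finite := by
  refine ((finite_Iic g).image fun h => dyadicIco h ⌊(a / 2 ^ g : ℝ) * 2 ^ h⌋₊).subset ?_
  rintro _ ⟨⟨h, b, rfl⟩, hsub⟩
  refine ⟨h, le_of_dyadicIco_subset hsub, ?_⟩
  rw [← (mem_dyadicIco_iff (by positivity)).1 (hsub (left_mem_dyadicIco g a))]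

theorem exists_subset_maximal_of_subset_dyadicIntervals {𝓕 : Set (Set ℝ)}
    (h𝓕 : 𝓕 ⊆ dyadicIntervals) {I : Set ℝ} (hI : I ∈ 𝓕) :
    ∃ J, I ⊆ J ∧ Maximal (· ∈ 𝓕) J := by
  obtain ⟨g, a, rfl⟩ := h𝓕 hI
  have hfin : {K ∈ 𝓕 | dyadicIco g a ⊆ K}.Finite :=
    (finite_dyadicIntervals_superset g a).subset fun K hK => ⟨h𝓕 hK.1, hK.2⟩
  obtain ⟨J, hIJ, hJ⟩ := hfin.exists_le_maximal ⟨hI, subset_rfl⟩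
  exact ⟨J, hIJ, hJ.prop.1, fun K hK hJK => hJ.2 ⟨hK, hIJ.trans hJK⟩ hJK⟩

theorem pairwiseDisjoint_maximal_of_subset_dyadicIntervals {𝓕 : Set (Set ℝ)}
    (h𝓕 : 𝓕 ⊆ dyadicIntervals) : {J | Maximal (· ∈ 𝓕) J}.PairwiseDisjoint id := by
  intro I hI J hJ hIJ
  rcases subset_or_subset_or_disjoint_of_mem_dyadicIntervals (h𝓕 hI.prop) (h𝓕 hJ.prop)
    with h | h | h
  · exact absurd (hI.eq_of_le hJ.prop h) hIJ
  · exact absurd (hJ.eq_of_le hI.prop h).symm hIJ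
  · exact h

def argParam (z : ℂ) : ℝ := Int.fract (arg z / (2 * Real.pi))

theorem measurable_argParam : Measurable argParam :=
  (Complex.measurable_arg.div_const _).fract

theorem eq_norm_mul_exp_iff {z : ℂ} (hz : z ≠ 0) (θ : ℝ) :
    z = ‖z‖ * exp (θ * I) ↔ argParam z = Int.fract (θ / (2 * Real.pi)) := by
  have hnorm : (‖z‖ : ℂ) ≠ 0 := by simpa using hz
  have hexp : z = ‖z‖ * exp (θ * I) ↔ exp (arg z * I) = exp (θ * I) := by
    conv_rhs => rw [← mul_right_inj' hnorm, Complex.norm_mul_exp_arg_mul_I]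
  rw [hexp, Complex.exp_eq_exp_iff_exists_int, argParam, Int.fract_eq_fract]
  refine exists_congr fun n => ?_
  have hπ : (2 * Real.pi) ≠ 0 := by positivity
  rw [← sub_div, div_eq_iff hπ]
  constructor
  · intro h
    have h' : ((arg z : ℝ) : ℂ) = ((θ + n * (2 * Real.pi) : ℝ) : ℂ) := by
      push_cast
      exact mul_right_cancel₀ I_ne_zero (by linear_combination h)
    linarith [ofReal_injective h']
  · intro h
    rw [sub_eq_iff_eq_add'.1 h]
    push_cast
    ring

theorem exists_mem_dyadicIco_fract_eq_iff {g k : ℕ} {t : ℝ} (ht : t ∈ Ico (0 : ℝ) 1) :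
    (∃ x ∈ dyadicIco g k, Int.fract x = t) ↔ t ∈ dyadicIco g (k % 2 ^ g) := by
  have hmod : k % 2 ^ g < 2 ^ g := Nat.mod_lt _ (by positivity)
  rw [← Nat.mod_add_div k (2 ^ g)]
  simp only [mem_dyadicIco_add_mul_iff, Nat.add_mul_mod_self_left, Nat.mod_mod]
  constructor
  · rintro ⟨x, hx, rfl⟩
    rwa [← Int.fract_sub_natCast, Int.fract_eq_self.2 (dyadicIco_subset_Ico_zero_one hmod hx)]
  · intro hs
    exact ⟨t + (k / 2 ^ g : ℕ), by rwa [add_sub_cancel_right],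
      by rw [Int.fract_add_natCast, Int.fract_eq_self.2 ht]⟩

theorem onArc_iff_argParam_mem {g k : ℕ} {z : ℂ} (hz : z ≠ 0) :
    onArc g k z ↔ argParam z ∈ dyadicIco g (k % 2 ^ g) := by
  rw [← exists_mem_dyadicIco_fract_eq_iff (t := argParam z)
    ⟨Int.fract_nonneg _, Int.fract_lt_one _⟩, onArc]
  have hπ : 0 < 2 * Real.pi := by positivity
  have hscale (θ : ℝ) : (2 * Real.pi * k / 2 ^ g ≤ θ ∧ θ < 2 * Real.pi * (k + 1) / 2 ^ g) ↔
      θ / (2 * Real.pi) ∈ dyadicIco g k := by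
    rw [dyadicIco, mem_Ico, le_div_iff₀ hπ, div_lt_iff₀ hπ, div_mul_eq_mul_div,
      div_mul_eq_mul_div, mul_comm, mul_comm (_ + 1)]
  constructor
  · rintro ⟨θ, h1, h2, h3⟩
    exact ⟨θ / (2 * Real.pi), (hscale θ).1 ⟨h1, h2⟩, ((eq_norm_mul_exp_iff hz θ).1 h3).symm⟩
  · rintro ⟨x, hx, hxz⟩
    rw [← mul_div_cancel_left₀ x hπ.ne'] at hx hxz
    exact ⟨_, ((hscale _).2 hx).1, ((hscale _).2 hx).2, (eq_norm_mul_exp_iff hz _).2 hxz.symm⟩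

/-- The interval of `argParam`-values of the dyadic arc `I_{n,k}`; the index is reduced mod `2ⁿ`
because `I_{n,2ⁿ}` starts at angle `2π`. -/
def arcParam (p : ℕ × ℕ) : Set ℝ := dyadicIco p.1 (p.2 % 2 ^ p.1)

theorem arcParam_mem_dyadicIntervals (p : ℕ × ℕ) : arcParam p ∈ dyadicIntervals :=
  ⟨_, _, rfl⟩

theorem injOn_arcParam : InjOn arcParam dyadicSet := by
  rintro ⟨g, k⟩ ⟨-, hk1, hk2⟩ ⟨h, b⟩ ⟨-, hb1, hb2⟩ hkb
  obtain ⟨rfl, hmod⟩ := dyadicIco_inj.1 hkb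
  simp only at hmod hk1 hk2 hb1 hb2
  rcases hk2.lt_or_eq with hk | rfl <;> rcases hb2.lt_or_eq with hb | rfl
  all_goals simp_all [Nat.mod_eq_of_lt]
  all_goals omega

theorem ofReal_arcLen_eq_mul_volume (p : ℕ × ℕ) :
    ENNReal.ofReal (arcLen p.1) = ENNReal.ofReal (2 * Real.pi) * volume (arcParam p) := by
  rw [arcParam, volume_dyadicIco, ← ENNReal.ofReal_mul (by positivity), arcLen, mul_one_div]

theorem div_ofReal_arcLen_le_iff {g : ℕ} {a b : ℝ≥0∞} :
    a / ENNReal.ofReal (arcLen g) ≤ b ↔ a ≤ b * ENNReal.ofReal (arcLen g) :=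
  ENNReal.div_le_iff (ENNReal.ofReal_pos.2 (by unfold arcLen; positivity)).ne'
    ENNReal.ofReal_ne_top

theorem ne_zero_of_one_sub_norm_le {g : ℕ} (hg : 1 ≤ g) {w : ℂ} (hw : 1 - ‖w‖ ≤ (1 / 2 : ℝ) ^ g) :
    w ≠ 0 := by
  rintro rfl
  have : ((1 : ℝ) / 2) ^ g ≤ 1 / 2 := pow_le_of_le_one (by norm_num) (by norm_num) (by omega)
  norm_num at hw
  linarith

theorem mem_Wwin_iff {g k : ℕ} (hg : 1 ≤ g) {w : ℂ} :
    w ∈ Wwin g k ↔ ‖w‖ < 1 ∧ 1 - ‖w‖ ≤ (1 / 2 : ℝ) ^ g ∧ argParam w ∈ arcParam (g, k) := by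
  simp only [Wwin, unitDisc, mem_ofPred_eq, Metric.mem_ball, dist_zero_right, arcParam]
  refine and_congr_right' (and_congr_right fun hw => onArc_iff_argParam_mem ?_)
  exact ne_zero_of_one_sub_norm_le hg hw

theorem Rwin_eq_inter (g k : ℕ) : Rwin g k = Wwin g k ∩ {w | (1 / 2 : ℝ) ^ g / 2 < 1 - ‖w‖} := by
  ext w
  simp only [Rwin, Wwin, mem_inter_iff, mem_ofPred_eq]
  tauto

theorem measurableSet_Wwin {g k : ℕ} (hg : 1 ≤ g) : MeasurableSet (Wwin g k) := by
  have hW : Wwin g k = {w | ‖w‖ < 1} ∩ {w | 1 - ‖w‖ ≤ (1 / 2 : ℝ) ^ g} ∩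
      argParam ⁻¹' arcParam (g, k) := by
    ext w
    rw [mem_Wwin_iff hg]
    simp only [mem_inter_iff, mem_ofPred_eq, mem_preimage, and_assoc]
  rw [hW]
  exact ((measurableSet_lt (by fun_prop) (by fun_prop)).inter
    (measurableSet_le (by fun_prop) (by fun_prop))).inter
    (measurable_argParam measurableSet_Ico)

theorem measurableSet_Rwin {g k : ℕ} (hg : 1 ≤ g) : MeasurableSet (Rwin g k) := by
  rw [Rwin_eq_inter]
  exact (measurableSet_Wwin hg).inter (measurableSet_lt (by fun_prop) (by fun_prop))

theorem Wwin_subset_Wwin {g k h b : ℕ} (hh : 1 ≤ h) (hsub : arcParam (g, k) ⊆ arcParam (h, b)) :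
    Wwin g k ⊆ Wwin h b := by
  have hhg : h ≤ g := le_of_dyadicIco_subset hsub
  intro w hw
  rw [mem_Wwin_iff (hh.trans hhg)] at hw
  rw [mem_Wwin_iff hh]
  exact ⟨hw.1, hw.2.1.trans (pow_le_pow_of_le_one (by norm_num) (by norm_num) hhg), hsub hw.2.2⟩

theorem arcParam_subset_of_Rwin_inter_Wwin {g k h b : ℕ} (hg : 1 ≤ g) (hh : 1 ≤ h)
    (hne : (Rwin g k ∩ Wwin h b).Nonempty) : arcParam (g, k) ⊆ arcParam (h, b) := by
  obtain ⟨w, hwR, hwW⟩ := hne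
  rw [Rwin_eq_inter, mem_inter_iff, mem_Wwin_iff hg] at hwR
  rw [mem_Wwin_iff hh] at hwW
  have hhg : h ≤ g := by
    have : ((1 : ℝ) / 2) ^ (g + 1) < (1 / 2) ^ h := by
      rw [pow_succ, ← div_eq_mul_one_div]
      exact hwR.2.trans_le hwW.2.1
    have := (pow_lt_pow_iff_right_of_lt_one₀ (by norm_num) (by norm_num)).1 this
    omega
  exact dyadicIco_subset_of_le hhg ⟨argParam w, hwR.1.2.2, hwW.2.2⟩

theorem disjoint_Rwin {p q : ℕ × ℕ} (hp : p ∈ dyadicSet) (hq : q ∈ dyadicSet) (hpq : p ≠ q) :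
    Disjoint (Rwin p.1 p.2) (Rwin q.1 q.2) := by
  have hsub {p q : ℕ × ℕ} (hp : p ∈ dyadicSet) (hq : q ∈ dyadicSet)
      (hne : (Rwin p.1 p.2 ∩ Rwin q.1 q.2).Nonempty) : arcParam p ⊆ arcParam q :=
    arcParam_subset_of_Rwin_inter_Wwin hp.1 hq.1
      (hne.mono (inter_subset_inter_right _ (Rwin_eq_inter _ _ ▸ inter_subset_left)))
  by_contra hne
  rw [not_disjoint_iff_nonempty_inter] at hne
  exact hpq (injOn_arcParam hp hq ((hsub hp hq hne).antisymm (hsub hq hp (inter_comm _ _ ▸ hne))))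

theorem measure_biUnion_Rwin_le (μ : Measure ℂ) {P : Set (ℕ × ℕ)} (hP : P ⊆ dyadicSet)
    {q : ℕ × ℕ} (hPq : ∀ p ∈ P, arcParam p ⊆ arcParam q) {τ : ℝ≥0∞}
    (hτ : ∀ p ∈ P, μ (Wwin p.1 p.2) ≤ τ * ENNReal.ofReal (arcLen p.1)) :
    μ (⋃ p ∈ P, Rwin p.1 p.2) ≤ τ * ENNReal.ofReal (arcLen q.1) := by
  set M := {p ∈ P | Maximal (· ∈ arcParam '' P) (arcParam p)}
  have hdyadic : arcParam '' P ⊆ dyadicIntervals := by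
    rintro _ ⟨p, -, rfl⟩
    exact arcParam_mem_dyadicIntervals p
  have hcover : ⋃ p ∈ P, Rwin p.1 p.2 ⊆ ⋃ p ∈ M, Wwin p.1 p.2 := by
    refine iUnion₂_subset fun p hp => ?_
    obtain ⟨_, hsub, hmax⟩ := exists_subset_maximal_of_subset_dyadicIntervals hdyadic
      (mem_image_of_mem arcParam hp)
    obtain ⟨p', hp', rfl⟩ := hmax.prop
    refine subset_iUnion₂_of_subset p' (show p' ∈ M from ⟨hp', hmax⟩) ?_
    rw [Rwin_eq_inter]
    exact inter_subset_left.trans (Wwin_subset_Wwin (hP hp').1 hsub)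
  have hdisj : M.PairwiseDisjoint arcParam := fun p hp p' hp' hne =>
    pairwiseDisjoint_maximal_of_subset_dyadicIntervals hdyadic hp.2 hp'.2
      (injOn_arcParam.ne (hP hp.1) (hP hp'.1) hne)
  calc μ (⋃ p ∈ P, Rwin p.1 p.2)
      ≤ ∑' p : M, μ (Wwin p.1.1 p.1.2) :=
        (measure_mono hcover).trans (measure_biUnion_le μ M.to_countable _)
    _ ≤ ∑' p : M, τ * (ENNReal.ofReal (2 * Real.pi) * volume (arcParam p)) :=
        ENNReal.tsum_le_tsum fun p => ofReal_arcLen_eq_mul_volume p.1 ▸ hτ p p.2.1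
    _ = τ * ENNReal.ofReal (2 * Real.pi) * volume (⋃ p ∈ M, arcParam p) := by
        rw [measure_biUnion M.to_countable hdisj fun p _ => measurableSet_Ico,
          ENNReal.tsum_mul_left, ENNReal.tsum_mul_left, mul_assoc]
    _ ≤ τ * ENNReal.ofReal (2 * Real.pi) * volume (arcParam q) := by
        gcongr
        exact iUnion₂_subset fun p hp => hPq p hp.1
    _ = τ * ENNReal.ofReal (arcLen q.1) := by rw [ofReal_arcLen_eq_mul_volume, mul_assoc]

theorem tsum_measure_mul_indicator_eq {ι α β : Type*} [Countable ι] [MeasurableSpace α]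
    (μ : Measure α) {R : ι → Set α} (hdisj : Pairwise (Disjoint on R))
    (hmeas : ∀ i, MeasurableSet (R i)) (W : Set β) (z : ι → β) :
    ∑' i, μ (R i) * W.indicator (fun _ => 1) (z i) = μ (⋃ (i) (_ : z i ∈ W), R i) := by
  have hdisj' : Pairwise (Disjoint on fun i => ⋃ (_ : z i ∈ W), R i) := fun i j hij =>
    (hdisj hij).mono (iUnion_subset fun _ => subset_rfl) (iUnion_subset fun _ => subset_rfl)
  rw [measure_iUnion hdisj' fun i => MeasurableSet.iUnion fun _ => hmeas i]
  refine tsum_congr fun i => ?_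
  by_cases hi : z i ∈ W <;> simp [hi]

theorem discretized_measure_window_bound_general
    (μ : Measure ℂ)
    (e : ℕ → ℕ × ℕ) (he : Set.BijOn e (Set.Ici 1) dyadicSet)
    (hmono : AntitoneOn (fun j : ℕ => μ (Wwin (e j).1 (e j).2) / ENNReal.ofReal (arcLen (e j).1))
      (Set.Ici 1))
    (z : ℕ → ℂ) (hz : ∀ k : ℕ, 1 ≤ k → z k ∈ Rwin (e k).1 (e k).2)
    (n : ℕ) (hn : 1 ≤ n) :
    ∀ j : ℕ, 1 ≤ j →
      (∑' k : {m : ℕ // n ≤ m}, μ (Rwin (e (k : ℕ)).1 (e (k : ℕ)).2) *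
          (Wwin (e j).1 (e j).2).indicator (fun _ => (1 : ENNReal)) (z (k : ℕ))) /
        ENNReal.ofReal (arcLen (e j).1) ≤
      μ (Wwin (e n).1 (e n).2) / ENNReal.ofReal (arcLen (e n).1) := by
  intro j hj
  have he_mem {k : ℕ} (hk : n ≤ k) : e k ∈ dyadicSet := he.mapsTo (hn.trans hk)
  set T := {k | n ≤ k ∧ z k ∈ Wwin (e j).1 (e j).2}
  have hdisj : Pairwise (Disjoint on fun k : {m // n ≤ m} => Rwin (e k).1 (e k).2) :=
    fun k l hkl => disjoint_Rwin (he_mem k.2) (he_mem l.2)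
      (he.injOn.ne (hn.trans k.2) (hn.trans l.2) (Subtype.coe_ne_coe.2 hkl))
  rw [div_ofReal_arcLen_le_iff,
    tsum_measure_mul_indicator_eq μ hdisj fun k => measurableSet_Rwin (he_mem k.2).1]
  calc μ (⋃ (k : {m // n ≤ m}) (_ : z k ∈ Wwin (e j).1 (e j).2), Rwin (e k).1 (e k).2)
      ≤ μ (⋃ p ∈ e '' T, Rwin p.1 p.2) := by
        refine measure_mono (iUnion₂_subset fun k hk => ?_)
        exact subset_biUnion_of_mem (u := fun p : ℕ × ℕ => Rwin p.1 p.2) ⟨k, ⟨k.2, hk⟩, rfl⟩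
    _ ≤ _ := by
      refine measure_biUnion_Rwin_le μ (image_subset_iff.2 fun k hk => he_mem hk.1) ?_ ?_
      · rintro _ ⟨k, hk, rfl⟩
        exact arcParam_subset_of_Rwin_inter_Wwin (he_mem hk.1).1 (he.mapsTo hj).1
          ⟨z k, hz k (hn.trans hk.1), hk.2⟩
      · rintro _ ⟨k, hk, rfl⟩
        exact div_ofReal_arcLen_le_iff.1 (hmono hn (hn.trans hk.1) hk.1)

/-- **Lemma 3.1 (1).** Let `μ` be a positive Borel measure on `𝔻` with `S_μ` compact on `H²`
(equivalently, `lim_n sup_k μ(W(I_{n,k}))/|I_{n,k}| = 0`), let `(I_j)` enumerate the dyadic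
arcs so that `μ(W(I_j))/|I_j|` is nonincreasing, let `z_k ∈ R(I_k)`, fix `n ≥ 1` and set
`μ_n = Σ_{k ≥ n} μ(R(I_k)) δ_{z_k}`. Then `sup_j μ_n(W(I_j))/|I_j| ≤ τ_n(μ) = μ(W(I_n))/|I_n|`. -/
theorem discretized_measure_window_bound
    (μ : Measure ℂ) (hμ : μ unitDiscᶜ = 0)
    (hcomp : ∀ ε : ENNReal, 0 < ε → ∃ N : ℕ, ∀ n : ℕ, N ≤ n → ∀ k : ℕ, 1 ≤ k → k ≤ 2 ^ n →
      μ (Wwin n k) / ENNReal.ofReal (arcLen n) < ε)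
    (e : ℕ → ℕ × ℕ) (he : Set.BijOn e (Set.Ici 1) dyadicSet)
    (hmono : AntitoneOn (fun j : ℕ => μ (Wwin (e j).1 (e j).2) / ENNReal.ofReal (arcLen (e j).1))
      (Set.Ici 1))
    (z : ℕ → ℂ) (hz : ∀ k : ℕ, 1 ≤ k → z k ∈ Rwin (e k).1 (e k).2)
    (n : ℕ) (hn : 1 ≤ n) :
    ∀ j : ℕ, 1 ≤ j →
      (∑' k : {m : ℕ // n ≤ m}, μ (Rwin (e (k : ℕ)).1 (e (k : ℕ)).2) *
          (Wwin (e j).1 (e j).2).indicator (fun _ => (1 : ENNReal)) (z (k : ℕ))) /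
        ENNReal.ofReal (arcLen (e j).1) ≤
      μ (Wwin (e n).1 (e n).2) / ENNReal.ofReal (arcLen (e n).1) :=
  discretized_measure_window_bound_general μ e he hmono z hz n hn
end
end

section
/- Let h : [0,∞) → [0,∞) be an increasing function with h(0) = 0, and suppose there exist ε ∈ (0,1) and p ≥ 1 such that t ↦ h(t^ε) is concave and t ↦ h(t^p) is convex. Let μ be a positive Borel measure on 𝔻. Then there exists B > 0, depending only on ε and p, such that Σ_{n,k} h(μ(W(I_{n,k}))/|I_{n,k}|) ≤ Σ_{n,k} h(B·μ(R(I_{n,k}))/|I_{n,k}|), where the sums run over all dyadic arcs. -/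
open MeasureTheory Complex Set Filter

noncomputable section

open scoped ENNReal

/-!
Each window `W(I)` is the disjoint union of the inner halves `R(J)` of the dyadic arcs `J ⊆ I`.
Give `R(J)`, for `J` at depth `d` below `I`, the weight `λ_J = (1 - 2τ) τ^d`; these weights sum
to `1`, so Hölder's inequality and the subadditivity of the concave function `h(t^ε)` give
`h(∑_J x_J) ≤ ∑_J h(λ_J^{ε-1} x_J)`. With `τ^{1-ε} η = 1/2` the term of `J` becomes
`h(η^d (1 - 2τ)^{ε-1} μ(R(J))/|J|)`. Summing over `I` and exchanging the sums, each `J` of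
generation `m` collects the depths `d < m`, and convexity of `h(t^p)` bounds
`∑_d h(η^d u) ≤ ∑_d η^{d/p} h(u) ≤ h(A^p u)` with `A = (1 - η^{1/p})⁻¹`.
-/

section Convexity

variable {φ : ℝ → ℝ}

theorem ConvexOn.map_mul_le_mul (hφ : ConvexOn ℝ (Ici 0) φ) (hφ0 : φ 0 ≤ 0) {θ t : ℝ}
    (hθ0 : 0 ≤ θ) (hθ1 : θ ≤ 1) (ht : 0 ≤ t) : φ (θ * t) ≤ θ * φ t := by
  have := hφ.2 (mem_Ici.2 ht) self_mem_Ici hθ0 (sub_nonneg.2 hθ1) (add_sub_cancel θ 1)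
  simp only [smul_eq_mul, mul_zero, add_zero] at this
  linarith [mul_nonpos_of_nonneg_of_nonpos (sub_nonneg.2 hθ1) hφ0]

theorem ConcaveOn.map_add_le (hφ : ConcaveOn ℝ (Ici 0) φ) (hφ0 : 0 ≤ φ 0) {a b : ℝ}
    (ha : 0 ≤ a) (hb : 0 ≤ b) : φ (a + b) ≤ φ a + φ b := by
  rcases (add_nonneg ha hb).eq_or_lt with hab | hab
  · obtain ⟨rfl, rfl⟩ : a = 0 ∧ b = 0 := ⟨by linarith, by linarith⟩
    simpa using hφ0
  have key : ∀ c, 0 ≤ c → c ≤ a + b → c / (a + b) * φ (a + b) ≤ φ c := fun c hc hcs => by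
    have := hφ.neg.map_mul_le_mul (by simpa using hφ0) (div_nonneg hc hab.le)
      ((div_le_one hab).2 hcs) hab.le
    rw [div_mul_cancel₀ c hab.ne'] at this
    simpa using this
  have := add_le_add (key a ha (by linarith)) (key b hb (by linarith))
  rwa [← add_mul, ← add_div, div_self hab.ne', one_mul] at this

theorem ConcaveOn.map_sum_le (hφ : ConcaveOn ℝ (Ici 0) φ) (hφ0 : φ 0 = 0) {ι : Type*}
    (s : Finset ι) {x : ι → ℝ} (hx : ∀ i ∈ s, 0 ≤ x i) :
    φ (∑ i ∈ s, x i) ≤ ∑ i ∈ s, φ (x i) :=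
  Finset.le_sum_of_subadditive_on_pred φ (0 ≤ ·) hφ0.le
    (fun _ _ ha hb => hφ.map_add_le hφ0.ge ha hb)
    (fun _ _ => add_nonneg) x hx

end Convexity

section PowerConvexity

variable {h : ℝ → ℝ} {p : ℝ}

theorem map_mul_le_rpow_mul_of_convexOn_rpow (hp : 0 < p) (h0 : h 0 = 0)
    (hconv : ConvexOn ℝ (Ici 0) (fun t => h (t ^ p))) {θ v : ℝ} (hθ0 : 0 ≤ θ) (hθ1 : θ ≤ 1)
    (hv : 0 ≤ v) : h (θ * v) ≤ θ ^ p⁻¹ * h v := by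
  have := hconv.map_mul_le_mul (by simp [Real.zero_rpow hp.ne', h0]) (Real.rpow_nonneg hθ0 _)
    (Real.rpow_le_one hθ0 hθ1 (inv_nonneg.2 hp.le)) (Real.rpow_nonneg hv p⁻¹)
  rwa [Real.mul_rpow (Real.rpow_nonneg hθ0 _) (Real.rpow_nonneg hv _),
    Real.rpow_inv_rpow hθ0 hp.ne', Real.rpow_inv_rpow hv hp.ne'] at this

theorem mul_map_le_map_rpow_mul_of_convexOn_rpow (hp : 0 < p) (h0 : h 0 = 0)
    (hconv : ConvexOn ℝ (Ici 0) (fun t => h (t ^ p))) {K v : ℝ} (hK : 1 ≤ K) (hv : 0 ≤ v) :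
    K * h v ≤ h (K ^ p * v) := by
  have hK0 : 0 < K := one_pos.trans_le hK
  have hKp : 0 < K ^ p := Real.rpow_pos_of_pos hK0 p
  have := map_mul_le_rpow_mul_of_convexOn_rpow hp h0 hconv (inv_nonneg.2 hKp.le)
    (inv_le_one_of_one_le₀ (Real.one_le_rpow hK hp.le)) (mul_nonneg hKp.le hv)
  rwa [inv_mul_cancel_left₀ hKp.ne', Real.inv_rpow hKp.le, Real.rpow_rpow_inv hK0.le hp.ne',
    le_inv_mul_iff₀ hK0] at this

theorem sum_range_ofReal_le_of_convexOn_rpow (hp : 0 < p) (hmono : MonotoneOn h (Ici 0))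
    (h0 : h 0 = 0) (hconv : ConvexOn ℝ (Ici 0) (fun t => h (t ^ p))) {η u : ℝ} (hη0 : 0 < η)
    (hη1 : η < 1) (hu : 0 ≤ u) (m : ℕ) :
    ∑ d ∈ Finset.range m, ENNReal.ofReal (h (η ^ d * u)) ≤
      ENNReal.ofReal (h ((1 - η ^ p⁻¹)⁻¹ ^ p * u)) := by
  set ρ := η ^ p⁻¹
  have hρ0 : 0 < ρ := Real.rpow_pos_of_pos hη0 _
  have hρ1 : ρ < 1 := Real.rpow_lt_one hη0.le hη1 (inv_pos.2 hp)
  have hhu : 0 ≤ h u := h0 ▸ hmono self_mem_Ici hu hu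
  have hterm (d : ℕ) : h (η ^ d * u) ≤ ρ ^ d * h u := by
    rw [Real.rpow_pow_comm hη0.le]
    exact map_mul_le_rpow_mul_of_convexOn_rpow hp h0 hconv (pow_nonneg hη0.le d)
      (pow_le_one₀ hη0.le hη1.le) hu
  have hnonneg (d : ℕ) : 0 ≤ h (η ^ d * u) := by
    have hdu := mul_nonneg (pow_nonneg hη0.le d) hu
    exact h0 ▸ hmono self_mem_Ici hdu hdu
  rw [← ENNReal.ofReal_sum_of_nonneg fun d _ => hnonneg d]
  refine ENNReal.ofReal_le_ofReal ?_
  calc ∑ d ∈ Finset.range m, h (η ^ d * u)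
      ≤ (∑ d ∈ Finset.range m, ρ ^ d) * h u := by
        rw [Finset.sum_mul]; exact Finset.sum_le_sum fun d _ => hterm d
    _ ≤ (1 - ρ)⁻¹ * h u := by
        gcongr
        rw [← tsum_geometric_of_lt_one hρ0.le hρ1]
        exact (summable_geometric_of_lt_one hρ0.le hρ1).sum_le_tsum _
          fun d _ => pow_nonneg hρ0.le d
    _ ≤ h ((1 - ρ)⁻¹ ^ p * u) :=
        mul_map_le_map_rpow_mul_of_convexOn_rpow hp h0 hconv
          ((one_le_inv₀ (sub_pos.2 hρ1)).2 (sub_le_self _ hρ0.le)) hu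

end PowerConvexity

section ConcavePower

variable {h : ℝ → ℝ} {ε : ℝ}

theorem map_sum_rpow_mul_le_of_concaveOn_rpow (hε0 : 0 < ε) (hε1 : ε < 1)
    (hmono : MonotoneOn h (Ici 0)) (h0 : h 0 = 0)
    (hconc : ConcaveOn ℝ (Ici 0) (fun t => h (t ^ ε))) {ι : Type*} (s : Finset ι)
    {w y : ι → ℝ} (hw : ∀ i ∈ s, 0 ≤ w i) (hw1 : ∑ i ∈ s, w i ≤ 1) (hy : ∀ i ∈ s, 0 ≤ y i) :
    h (∑ i ∈ s, w i ^ (1 - ε) * y i) ≤ ∑ i ∈ s, h (y i) := by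
  have hsum_nonneg : 0 ≤ ∑ i ∈ s, y i ^ ε⁻¹ :=
    Finset.sum_nonneg fun i hi => Real.rpow_nonneg (hy i hi) _
  have holder : ∑ i ∈ s, w i ^ (1 - ε) * y i ≤ (∑ i ∈ s, y i ^ ε⁻¹) ^ ε :=
    calc ∑ i ∈ s, w i ^ (1 - ε) * y i
        ≤ (∑ i ∈ s, (w i ^ (1 - ε)) ^ (1 - ε)⁻¹) ^ (1 / (1 - ε)⁻¹) *
            (∑ i ∈ s, y i ^ ε⁻¹) ^ (1 / ε⁻¹) :=
          Real.inner_le_Lp_mul_Lq_of_nonneg s (.one_sub_inv_inv hε0 hε1)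
            (fun i hi => Real.rpow_nonneg (hw i hi) _) hy
      _ = (∑ i ∈ s, w i) ^ (1 - ε) * (∑ i ∈ s, y i ^ ε⁻¹) ^ ε := by
          rw [Finset.sum_congr rfl fun i hi => Real.rpow_rpow_inv (hw i hi) (sub_pos.2 hε1).ne',
            one_div, one_div, inv_inv, inv_inv]
      _ ≤ (∑ i ∈ s, y i ^ ε⁻¹) ^ ε :=
          mul_le_of_le_one_left (Real.rpow_nonneg hsum_nonneg _)
            (Real.rpow_le_one (Finset.sum_nonneg hw) hw1 (sub_pos.2 hε1).le)
  calc h (∑ i ∈ s, w i ^ (1 - ε) * y i)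
      ≤ h ((∑ i ∈ s, y i ^ ε⁻¹) ^ ε) :=
        hmono (Finset.sum_nonneg fun i hi => mul_nonneg (Real.rpow_nonneg (hw i hi) _) (hy i hi))
          (Real.rpow_nonneg hsum_nonneg _) holder
    _ ≤ ∑ i ∈ s, h ((y i ^ ε⁻¹) ^ ε) :=
        hconc.map_sum_le (by simp [Real.zero_rpow hε0.ne', h0]) s
          fun i hi => Real.rpow_nonneg (hy i hi) _
    _ = ∑ i ∈ s, h (y i) :=
        Finset.sum_congr rfl fun i hi => by rw [Real.rpow_inv_rpow (hy i hi) hε0.ne']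

theorem continuousAt_of_concaveOn_rpow (hε0 : 0 < ε)
    (hconc : ConcaveOn ℝ (Ici 0) (fun t => h (t ^ ε))) {S : ℝ} (hS : 0 < S) :
    ContinuousAt h S := by
  have hφ : ContinuousAt (fun t => h (t ^ ε)) (S ^ ε⁻¹) := by
    refine (hconc.continuousOn_interior _ ?_).continuousAt ?_ <;>
      simp only [interior_Ici, isOpen_Ioi.mem_nhds_iff, mem_Ioi] <;> positivity
  refine (hφ.comp (f := fun t => t ^ ε⁻¹)
    (Real.continuousAt_rpow_const _ _ (Or.inl hS.ne'))).congr ?_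
  filter_upwards [lt_mem_nhds hS] with t ht
  simp [Real.rpow_inv_rpow ht.le hε0.ne']

theorem ofReal_map_tsum_rpow_mul_le_of_concaveOn_rpow (hε0 : 0 < ε) (hε1 : ε < 1)
    (hmono : MonotoneOn h (Ici 0)) (h0 : h 0 = 0)
    (hconc : ConcaveOn ℝ (Ici 0) (fun t => h (t ^ ε))) {ι : Type*} {w y : ι → ℝ}
    (hw : ∀ i, 0 ≤ w i) (hw1 : ∑' i, ENNReal.ofReal (w i) ≤ 1) (hy : ∀ i, 0 ≤ y i)
    (hs : Summable fun i => w i ^ (1 - ε) * y i) :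
    ENNReal.ofReal (h (∑' i, w i ^ (1 - ε) * y i)) ≤ ∑' i, ENNReal.ofReal (h (y i)) := by
  have hnonneg (t : ℝ) (ht : 0 ≤ t) : 0 ≤ h t := h0 ▸ hmono self_mem_Ici ht ht
  have hS0 : 0 ≤ ∑' i, w i ^ (1 - ε) * y i :=
    tsum_nonneg fun i => mul_nonneg (Real.rpow_nonneg (hw i) _) (hy i)
  rcases hS0.eq_or_lt with hS | hS
  · simp [← hS, h0]
  have hpartial (s : Finset ι) :
      ENNReal.ofReal (h (∑ i ∈ s, w i ^ (1 - ε) * y i)) ≤ ∑' i, ENNReal.ofReal (h (y i)) := by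
    have hws : ∑ i ∈ s, w i ≤ 1 := by
      rw [← ENNReal.ofReal_le_one, ENNReal.ofReal_sum_of_nonneg fun i _ => hw i]
      exact (ENNReal.sum_le_tsum s).trans hw1
    calc ENNReal.ofReal (h (∑ i ∈ s, w i ^ (1 - ε) * y i))
        ≤ ENNReal.ofReal (∑ i ∈ s, h (y i)) := ENNReal.ofReal_le_ofReal
          (map_sum_rpow_mul_le_of_concaveOn_rpow hε0 hε1 hmono h0 hconc s
            (fun i _ => hw i) hws fun i _ => hy i)
      _ = ∑ i ∈ s, ENNReal.ofReal (h (y i)) :=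
          ENNReal.ofReal_sum_of_nonneg fun i _ => hnonneg _ (hy i)
      _ ≤ ∑' i, ENNReal.ofReal (h (y i)) := ENNReal.sum_le_tsum s
  exact le_of_tendsto' (ENNReal.continuous_ofReal.continuousAt.tendsto.comp
    ((continuousAt_of_concaveOn_rpow hε0 hconc hS).tendsto.comp hs.hasSum)) hpartial

end ConcavePower

theorem exists_int_add_mul_eq_iff {r k N : ℕ} (hr : r < N) :
    (∃ m : ℤ, (r : ℤ) + m * N = k) ↔ r = k % N := by
  have : (∃ m : ℤ, (r : ℤ) + m * N = k) ↔ (r : ℤ) ≡ k [ZMOD N] := by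
    simp only [Int.modEq_iff_add_fac, eq_comm (a := (k : ℤ)), mul_comm]
  rw [this, Int.natCast_modEq_iff, Nat.ModEq, Nat.mod_eq_of_lt hr]

section Arcs

open Real

def arcIndex (n : ℕ) (z : ℂ) : ℕ := ⌊Int.fract (arg z / (2 * π)) * 2 ^ n⌋₊

variable {n k : ℕ} {z : ℂ}

theorem eq_norm_mul_exp_iff_s12 (hz : z ≠ 0) (θ : ℝ) :
    z = ‖z‖ * exp (θ * I) ↔ ∃ m : ℤ, θ = arg z + m * (2 * π) := by
  nth_rewrite 1 [← norm_mul_exp_arg_mul_I z]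
  rw [mul_right_inj' (ofReal_ne_zero.2 (norm_ne_zero_iff.2 hz)), eq_comm,
    exp_eq_exp_iff_exists_int]
  refine exists_congr fun m => ⟨fun h => ?_, fun h => by rw [h]; push_cast; ring⟩
  have : (θ : ℂ) = ((arg z + m * (2 * π) : ℝ) : ℂ) :=
    mul_right_cancel₀ I_ne_zero (h.trans (by push_cast; ring))
  exact_mod_cast this

theorem onArc_iff_exists_floor (hz : z ≠ 0) :
    onArc n k z ↔ ∃ m : ℤ, ⌊(arg z / (2 * π) + m) * 2 ^ n⌋ = k := by
  have hπ : 0 < 2 * π / 2 ^ n := by positivity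
  simp only [onArc, eq_norm_mul_exp_iff_s12 hz]
  constructor
  · rintro ⟨θ, h₁, h₂, m, rfl⟩
    refine ⟨m, Int.floor_eq_iff.2 ⟨?_, ?_⟩⟩
    · rw [← mul_le_mul_iff_right₀ hπ]; field_simp at h₁ ⊢; push_cast; linarith
    · rw [← mul_lt_mul_iff_right₀ hπ]; field_simp at h₂ ⊢; push_cast; linarith
  · rintro ⟨m, hm⟩
    obtain ⟨h₁, h₂⟩ := Int.floor_eq_iff.1 hm
    refine ⟨arg z + m * (2 * π), ?_, ?_, m, rfl⟩
    · rw [← mul_le_mul_iff_right₀ hπ] at h₁; field_simp at h₁ ⊢; push_cast at h₁; linarith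
    · rw [← mul_lt_mul_iff_right₀ hπ] at h₂; field_simp at h₂ ⊢; push_cast at h₂; linarith

theorem arcIndex_lt (n : ℕ) (z : ℂ) : arcIndex n z < 2 ^ n := by
  rw [arcIndex, Nat.floor_lt (mul_nonneg (Int.fract_nonneg _) (by positivity))]
  push_cast
  exact mul_lt_of_lt_one_left (by positivity) (Int.fract_lt_one _)

theorem onArc_iff_arcIndex (hz : z ≠ 0) : onArc n k z ↔ arcIndex n z = k % 2 ^ n := by
  set a := arg z / (2 * π)
  have hfloor (m : ℤ) : ⌊(a + m) * 2 ^ n⌋ = arcIndex n z + (⌊a⌋ + m) * (2 ^ n : ℕ) := by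
    have : (a + m) * 2 ^ n = Int.fract a * 2 ^ n + (((⌊a⌋ + m) * (2 ^ n : ℕ) : ℤ) : ℝ) := by
      push_cast; linear_combination (-(2 : ℝ) ^ n) * Int.fract_add_floor a
    rw [this, Int.floor_add_intCast, arcIndex,
      Int.natCast_floor_eq_floor (mul_nonneg (Int.fract_nonneg a) (by positivity))]
  rw [onArc_iff_exists_floor hz, ← exists_int_add_mul_eq_iff (arcIndex_lt n z)]
  change (∃ m : ℤ, ⌊(a + m) * 2 ^ n⌋ = k) ↔ _
  simp only [hfloor]
  exact ⟨fun ⟨m, hm⟩ => ⟨⌊a⌋ + m, hm⟩, fun ⟨m, hm⟩ => ⟨m - ⌊a⌋, by rwa [add_sub_cancel]⟩⟩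

theorem arcIndex_add_div (n d : ℕ) (z : ℂ) : arcIndex (n + d) z / 2 ^ d = arcIndex n z := by
  rw [arcIndex, arcIndex, ← Nat.floor_div_natCast]
  congr 1
  push_cast
  rw [pow_add]
  field_simp

theorem measurable_arcIndex (n : ℕ) : Measurable (arcIndex n) :=
  ((measurable_fract.comp (Complex.measurable_arg.div_const _)).mul_const _).nat_floor

end Arcs

section Windows

variable {n k : ℕ} {z : ℂ}

theorem ne_zero_of_one_sub_norm_le_s12 (hn : 1 ≤ n) (h : 1 - ‖z‖ ≤ (1 / 2 : ℝ) ^ n) : z ≠ 0 := by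
  rintro rfl
  have : (1 / 2 : ℝ) ^ n ≤ 1 / 2 := pow_le_of_le_one (by norm_num) (by norm_num) (by omega)
  norm_num at h
  linarith

theorem mem_Wwin_iff_s12 (hn : 1 ≤ n) :
    z ∈ Wwin n k ↔ ‖z‖ < 1 ∧ 1 - ‖z‖ ≤ (1 / 2 : ℝ) ^ n ∧ arcIndex n z = k % 2 ^ n := by
  simp only [Wwin, mem_ofPred_eq, unitDisc, Metric.mem_ball, dist_zero_right]
  exact and_congr_right fun _ => and_congr_right fun h =>
    onArc_iff_arcIndex (ne_zero_of_one_sub_norm_le_s12 hn h)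

theorem mem_Rwin_iff (hn : 1 ≤ n) :
    z ∈ Rwin n k ↔ ‖z‖ < 1 ∧ (1 / 2 : ℝ) ^ n / 2 < 1 - ‖z‖ ∧ 1 - ‖z‖ ≤ (1 / 2 : ℝ) ^ n ∧
      arcIndex n z = k % 2 ^ n := by
  simp only [Rwin, mem_ofPred_eq, unitDisc, Metric.mem_ball, dist_zero_right]
  exact and_congr_right fun _ => and_congr_right fun _ => and_congr_right fun h =>
    onArc_iff_arcIndex (ne_zero_of_one_sub_norm_le_s12 hn h)

theorem Wwin_mod (hn : 1 ≤ n) (k : ℕ) : Wwin n (k % 2 ^ n) = Wwin n k := by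
  ext z
  simp only [mem_Wwin_iff_s12 hn, Nat.mod_mod]

theorem Rwin_mod (hn : 1 ≤ n) (k : ℕ) : Rwin n (k % 2 ^ n) = Rwin n k := by
  ext z
  simp only [mem_Rwin_iff hn, Nat.mod_mod]

theorem measurableSet_Rwin_s12 (hn : 1 ≤ n) (k : ℕ) : MeasurableSet (Rwin n k) := by
  have : Rwin n k = {z | ‖z‖ < 1} ∩ {z | (1 / 2 : ℝ) ^ n / 2 < 1 - ‖z‖} ∩
      {z | 1 - ‖z‖ ≤ (1 / 2 : ℝ) ^ n} ∩ arcIndex n ⁻¹' {k % 2 ^ n} := by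
    ext z
    simp only [mem_Rwin_iff hn, mem_inter_iff, mem_ofPred_eq, mem_preimage, mem_singleton_iff,
      and_assoc]
  rw [this]
  exact ((measurableSet_lt measurable_norm measurable_const).inter
    (measurableSet_lt measurable_const (measurable_const.sub measurable_norm))).inter
    (measurableSet_le (measurable_const.sub measurable_norm) measurable_const) |>.inter
    (measurable_arcIndex n (measurableSet_singleton _))

theorem le_of_half_pow_div_two_lt_of_le {a b : ℕ} {x : ℝ} (ha : (1 / 2 : ℝ) ^ a / 2 < x)
    (hb : x ≤ (1 / 2 : ℝ) ^ b) : b ≤ a := by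
  by_contra! hab
  have : (1 / 2 : ℝ) ^ b ≤ (1 / 2) ^ (a + 1) := pow_le_pow_of_le_one (by norm_num) (by norm_num) hab
  rw [pow_succ] at this
  linarith

theorem exists_half_pow_div_two_lt_le {x : ℝ} (hx0 : 0 < x) (hx : x ≤ (1 / 2 : ℝ) ^ n) :
    ∃ d, (1 / 2 : ℝ) ^ (n + d) / 2 < x ∧ x ≤ (1 / 2 : ℝ) ^ (n + d) := by
  obtain ⟨m, h₁, h₂⟩ := exists_nat_pow_near_of_lt_one hx0
    (hx.trans (pow_le_one₀ (by norm_num) (by norm_num))) (by norm_num)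
    (by norm_num : (1 / 2 : ℝ) < 1)
  rw [pow_succ, ← div_eq_mul_one_div] at h₁
  obtain ⟨d, rfl⟩ := Nat.exists_eq_add_of_le (le_of_half_pow_div_two_lt_of_le h₁ hx)
  exact ⟨d, h₁, h₂⟩

theorem two_pow_mul_add_lt {d i : ℕ} (hk : k < 2 ^ n) (hi : i < 2 ^ d) :
    2 ^ d * k + i < 2 ^ (n + d) :=
  calc 2 ^ d * k + i < 2 ^ d * (k + 1) := by rw [mul_add_one]; omega
    _ ≤ 2 ^ d * 2 ^ n := Nat.mul_le_mul_left _ hk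
    _ = 2 ^ (n + d) := by rw [pow_add, mul_comm]

theorem Wwin_eq_iUnion_Rwin (hn : 1 ≤ n) (hk : k < 2 ^ n) :
    Wwin n k = ⋃ q : Σ d, Fin (2 ^ d), Rwin (n + q.1) (2 ^ q.1 * k + q.2) := by
  ext z
  simp only [mem_iUnion, Sigma.exists, mem_Wwin_iff_s12 hn, Nat.mod_eq_of_lt hk]
  constructor
  · rintro ⟨hz, hr, harc⟩
    obtain ⟨d, hd₁, hd₂⟩ := exists_half_pow_div_two_lt_le (sub_pos.2 hz) hr
    have hi : arcIndex (n + d) z % 2 ^ d < 2 ^ d := Nat.mod_lt _ (by positivity)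
    refine ⟨d, ⟨_, hi⟩, ?_⟩
    rw [mem_Rwin_iff (by omega), Nat.mod_eq_of_lt (two_pow_mul_add_lt hk hi)]
    refine ⟨hz, hd₁, hd₂, ?_⟩
    rw [← harc, ← arcIndex_add_div n d z, Nat.div_add_mod]
  · rintro ⟨d, i, hz⟩
    rw [mem_Rwin_iff (by omega), Nat.mod_eq_of_lt (two_pow_mul_add_lt hk i.2)] at hz
    obtain ⟨hz, -, hr, harc⟩ := hz
    refine ⟨hz, hr.trans (pow_le_pow_of_le_one (by norm_num) (by norm_num) (by omega)), ?_⟩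
    rw [← arcIndex_add_div n d z, harc, Nat.mul_add_div (by positivity), Nat.div_eq_of_lt i.2,
      add_zero]

theorem pairwise_disjoint_Rwin (hn : 1 ≤ n) (hk : k < 2 ^ n) :
    Pairwise (Function.onFun Disjoint fun q : Σ d, Fin (2 ^ d) =>
      Rwin (n + q.1) (2 ^ q.1 * k + q.2)) := by
  rintro ⟨d, i⟩ ⟨d', i'⟩ hne
  refine Set.disjoint_left.2 fun z hz hz' => hne ?_
  dsimp only at hz hz'
  rw [mem_Rwin_iff (by omega), Nat.mod_eq_of_lt (two_pow_mul_add_lt hk i.2)] at hz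
  rw [mem_Rwin_iff (by omega), Nat.mod_eq_of_lt (two_pow_mul_add_lt hk i'.2)] at hz'
  obtain rfl : d = d' := by
    have h₁ := le_of_half_pow_div_two_lt_of_le hz.2.1 hz'.2.2.1
    have h₂ := le_of_half_pow_div_two_lt_of_le hz'.2.1 hz.2.2.1
    omega
  obtain rfl : i = i' := Fin.ext (by have := hz.2.2.2.symm.trans hz'.2.2.2; omega)
  rfl

theorem measure_Wwin (μ : Measure ℂ) (hn : 1 ≤ n) (hk : k < 2 ^ n) :
    μ (Wwin n k) = ∑' q : Σ d, Fin (2 ^ d), μ (Rwin (n + q.1) (2 ^ q.1 * k + q.2)) := by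
  rw [Wwin_eq_iUnion_Rwin hn hk, measure_iUnion (pairwise_disjoint_Rwin hn hk)
    fun q => measurableSet_Rwin_s12 (by omega) _]

end Windows

theorem arcLen_pos (n : ℕ) : 0 < arcLen n := by
  rw [arcLen]
  positivity

theorem arcLen_add (n d : ℕ) : arcLen (n + d) = arcLen n / 2 ^ d := by
  rw [arcLen, arcLen, pow_add, div_div]

theorem tsum_ofReal_dyadic_weight {τ : ℝ} (hτ0 : 0 ≤ τ) (hτ : 2 * τ < 1) :
    ∑' q : Σ d, Fin (2 ^ d), ENNReal.ofReal ((1 - 2 * τ) * τ ^ q.1) = 1 := by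
  have h2τ : 0 ≤ 2 * τ := by positivity
  have hterm (d : ℕ) : ∑' _ : Fin (2 ^ d), ENNReal.ofReal ((1 - 2 * τ) * τ ^ d) =
      ENNReal.ofReal ((1 - 2 * τ) * (2 * τ) ^ d) := by
    rw [tsum_fintype, Finset.sum_const, Finset.card_univ, Fintype.card_fin, nsmul_eq_mul,
      ← ENNReal.ofReal_natCast, ← ENNReal.ofReal_mul (by positivity)]
    congr 1
    push_cast
    ring
  rw [ENNReal.tsum_sigma', tsum_congr hterm, ← ENNReal.ofReal_tsum_of_nonneg
    (fun d => mul_nonneg (sub_nonneg.2 hτ.le) (pow_nonneg h2τ d))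
    ((summable_geometric_of_lt_one h2τ hτ).mul_left _), tsum_mul_left,
    tsum_geometric_of_lt_one h2τ hτ, mul_inv_cancel₀ (sub_pos.2 hτ).ne', ENNReal.ofReal_one]

section WindowBound
variable {h : ℝ → ℝ} {ε τ η : ℝ} {n k : ℕ}

theorem ofReal_map_Wwin_le_tsum_Rwin (hε0 : 0 < ε) (hε1 : ε < 1) (hmono : MonotoneOn h (Ici 0))
    (h0 : h 0 = 0) (hconc : ConcaveOn ℝ (Ici 0) (fun t => h (t ^ ε))) (hτ0 : 0 < τ)
    (hτ : 2 * τ < 1) (hη : 0 ≤ η) (hτη : τ ^ (1 - ε) * η = 1 / 2) (μ : Measure ℂ)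
    (hn : 1 ≤ n) (hk : k < 2 ^ n) :
    ENNReal.ofReal (h ((μ (Wwin n k)).toReal / arcLen n)) ≤
      ∑' q : Σ d, Fin (2 ^ d), ENNReal.ofReal (h (η ^ q.1 *
        ((1 - 2 * τ) ^ (ε - 1) * (μ (Rwin (n + q.1) (2 ^ q.1 * k + q.2))).toReal /
          arcLen (n + q.1)))) := by
  rcases eq_or_ne (μ (Wwin n k)) ∞ with htop | htop
  · simp [htop, h0]
  have hc : 0 < 1 - 2 * τ := sub_pos.2 hτ
  have hweight (d : ℕ) :
      ((1 - 2 * τ) * τ ^ d) ^ (1 - ε) * η ^ d * (1 - 2 * τ) ^ (ε - 1) = 1 / 2 ^ d := by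
    rw [Real.mul_rpow hc.le (pow_nonneg hτ0.le d), ← Real.rpow_pow_comm hτ0.le, ← one_div_pow,
      ← hτη, mul_pow]
    have : (1 - 2 * τ) ^ (1 - ε) * (1 - 2 * τ) ^ (ε - 1) = 1 := by
      rw [← Real.rpow_add hc, sub_add_sub_cancel', sub_self, Real.rpow_zero]
    linear_combination ((τ ^ (1 - ε)) ^ d * η ^ d) * this
  have hR (q : Σ d, Fin (2 ^ d)) :
      ((1 - 2 * τ) * τ ^ q.1) ^ (1 - ε) * (η ^ q.1 * ((1 - 2 * τ) ^ (ε - 1) *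
        (μ (Rwin (n + q.1) (2 ^ q.1 * k + q.2))).toReal / arcLen (n + q.1))) =
      (μ (Rwin (n + q.1) (2 ^ q.1 * k + q.2))).toReal / arcLen n := by
    calc _ = ((1 - 2 * τ) * τ ^ q.1) ^ (1 - ε) * η ^ q.1 * (1 - 2 * τ) ^ (ε - 1) *
          ((μ (Rwin (n + q.1) (2 ^ q.1 * k + q.2))).toReal / arcLen (n + q.1)) := by ring
      _ = _ := by
        have := arcLen_pos n
        rw [hweight, arcLen_add]
        field_simp
  rw [measure_Wwin μ hn hk] at htop ⊢
  rw [ENNReal.tsum_toReal_eq fun q => ne_top_of_le_ne_top htop (ENNReal.le_tsum q),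
    ← tsum_div_const, ← tsum_congr hR]
  refine ofReal_map_tsum_rpow_mul_le_of_concaveOn_rpow hε0 hε1 hmono h0 hconc
    (fun q => mul_nonneg hc.le (pow_nonneg hτ0.le _)) (tsum_ofReal_dyadic_weight hτ0.le hτ).le
    (fun q => mul_nonneg (pow_nonneg hη _) (div_nonneg (mul_nonneg (Real.rpow_nonneg hc.le _)
      ENNReal.toReal_nonneg) (arcLen_pos _).le)) ?_
  simp only [hR]
  exact (ENNReal.summable_toReal htop).div_const _

end WindowBound

section Reindexing

theorem Finset.sum_Icc_one_eq_sum_range {M : Type*} [AddCommMonoid M] {N : ℕ} (f : ℕ → M)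
    (hf : ∀ k, f (k % N) = f k) : ∑ k ∈ Finset.Icc 1 N, f k = ∑ k ∈ Finset.range N, f k := by
  refine Finset.sum_nbij' (· % N) (fun k => if k = 0 then N else k) ?_ ?_ ?_ ?_
    fun k _ => (hf k).symm
  · intro k hk
    simp only [mem_Icc, mem_range] at hk ⊢
    exact Nat.mod_lt _ (by omega)
  · intro k hk
    simp only [mem_Icc, mem_range] at hk ⊢
    split_ifs <;> omega
  · intro k hk
    simp only [mem_Icc] at hk
    rcases hk.2.eq_or_lt with rfl | hlt
    · simp
    · rw [Nat.mod_eq_of_lt hlt, if_neg (by omega)]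
  · intro k hk
    simp only [mem_range] at hk
    split_ifs with h0 <;> simp [h0, Nat.mod_eq_of_lt hk]

theorem tsum_dyadicSet_eq (G : ℕ → ℕ → ℝ≥0∞)
    (hG : ∀ n k, G (n + 1) (k % 2 ^ (n + 1)) = G (n + 1) k) :
    ∑' q : dyadicSet, G q.1.1 q.1.2 = ∑' n, ∑ k ∈ Finset.range (2 ^ (n + 1)), G (n + 1) k := by
  let e : (Σ n : ℕ, {k // k ∈ Finset.Icc 1 (2 ^ (n + 1))}) ≃ dyadicSet :=
    { toFun := fun x => ⟨(x.1 + 1, x.2), by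
        obtain ⟨n, k, hk⟩ := x
        simp only [dyadicSet, Finset.mem_Icc] at hk ⊢
        exact ⟨by omega, hk⟩⟩
      invFun := fun q => ⟨q.1.1 - 1, q.1.2, by
        obtain ⟨⟨n, k⟩, h₁, h₂⟩ := q
        simpa [Nat.sub_add_cancel h₁] using h₂⟩
      left_inv := fun _ => rfl
      right_inv := fun ⟨⟨n, k⟩, h⟩ => Subtype.ext (Prod.ext (Nat.sub_add_cancel h.1) rfl) }
  rw [← e.tsum_eq, ENNReal.tsum_sigma']
  refine tsum_congr fun n => ?_
  rw [← Finset.sum_Icc_one_eq_sum_range _ (hG n)]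
  exact Finset.tsum_subtype (Finset.Icc 1 (2 ^ (n + 1))) (G (n + 1))

theorem Finset.sum_range_sum_fin_mul_add {M : Type*} [AddCommMonoid M] (a b : ℕ) (g : ℕ → M) :
    ∑ k ∈ Finset.range a, ∑ i : Fin b, g (b * k + i) = ∑ j ∈ Finset.range (a * b), g j := by
  rw [Finset.sum_range, Finset.sum_range, ← Fintype.sum_prod_type']
  exact Fintype.sum_equiv finProdFinEquiv _ _ fun x => by
    simp [finProdFinEquiv_apply_val, add_comm]

theorem ENNReal.tsum_tsum_add_eq_tsum_sum_range (H : ℕ → ℕ → ℝ≥0∞) :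
    ∑' n, ∑' d, H (n + d) d = ∑' m, ∑ d ∈ Finset.range (m + 1), H m d := by
  have hshift (d : ℕ) : ∑' n, H (n + d) d = ∑' m, if d ≤ m then H m d else 0 := by
    rw [← (add_left_injective d).tsum_eq (f := fun m => if d ≤ m then H m d else 0)]
    · simp
    · intro m hm
      refine ⟨m - d, Nat.sub_add_cancel ?_⟩
      by_contra hdm
      exact hm (if_neg hdm)
  rw [ENNReal.tsum_comm, tsum_congr hshift, ENNReal.tsum_comm]
  refine tsum_congr fun m => ?_
  rw [tsum_eq_sum (s := Finset.range (m + 1)) fun d hd => if_neg (by simpa using hd)]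
  exact Finset.sum_congr rfl fun d hd => if_pos (by simpa [Nat.lt_succ_iff] using hd)

theorem tsum_sum_tsum_descendants_eq (F : ℕ → ℕ → ℕ → ℝ≥0∞) :
    ∑' n, ∑ k ∈ Finset.range (2 ^ (n + 1)), ∑' q : Σ d, Fin (2 ^ d),
        F (n + 1 + q.1) (2 ^ q.1 * k + q.2) q.1 =
      ∑' m, ∑ j ∈ Finset.range (2 ^ (m + 1)), ∑ d ∈ Finset.range (m + 1), F (m + 1) j d := by
  simp only [ENNReal.tsum_sigma', tsum_fintype]
  calc _ = ∑' n, ∑' d, ∑ k ∈ Finset.range (2 ^ (n + 1)), ∑ i : Fin (2 ^ d),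
          F (n + 1 + d) (2 ^ d * k + i) d :=
        tsum_congr fun n => (Summable.tsum_finsetSum fun _ _ => ENNReal.summable).symm
    _ = ∑' n, ∑' d, ∑ j ∈ Finset.range (2 ^ (n + d + 1)), F (n + d + 1) j d := by
        refine tsum_congr fun n => tsum_congr fun d => ?_
        have := Finset.sum_range_sum_fin_mul_add (2 ^ (n + 1)) (2 ^ d) fun j => F (n + d + 1) j d
        rw [← pow_add] at this
        rwa [add_right_comm n 1 d] at this ⊢
    _ = ∑' m, ∑ d ∈ Finset.range (m + 1), ∑ j ∈ Finset.range (2 ^ (m + 1)), F (m + 1) j d :=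
        ENNReal.tsum_tsum_add_eq_tsum_sum_range fun m d =>
          ∑ j ∈ Finset.range (2 ^ (m + 1)), F (m + 1) j d
    _ = _ := tsum_congr fun m => Finset.sum_comm

end Reindexing

theorem exists_dyadic_exponents {ε : ℝ} (hε0 : 0 < ε) (hε1 : ε < 1) :
    ∃ τ η : ℝ, 0 < τ ∧ 2 * τ < 1 ∧ 0 < η ∧ η < 1 ∧ τ ^ (1 - ε) * η = 1 / 2 := by
  have hs : 1 < (1 - ε / 2) / (1 - ε) := by rw [one_lt_div (by linarith)]; linarith
  refine ⟨2 ^ (-((1 - ε / 2) / (1 - ε))), 2 ^ (-(ε / 2)), by positivity, ?_, by positivity,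
    Real.rpow_lt_one_of_one_lt_of_neg one_lt_two (by linarith), ?_⟩
  · have : (2 : ℝ) ^ (-((1 - ε / 2) / (1 - ε))) < 2 ^ (-1 : ℝ) :=
      Real.rpow_lt_rpow_of_exponent_lt one_lt_two (by linarith)
    rw [Real.rpow_neg_one] at this
    linarith
  · rw [← Real.rpow_mul zero_le_two, ← Real.rpow_add zero_lt_two, neg_mul,
      div_mul_cancel₀ _ (by linarith), ← neg_add, sub_add_cancel, Real.rpow_neg_one, one_div]

/-- **Lemma 3.3.** Let `h : [0,∞) → [0,∞)` be increasing with `h(0) = 0`, with `t ↦ h(t^ε)`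
concave and `t ↦ h(t^p)` convex for some `ε ∈ (0,1)`, `p ≥ 1`. Then there is `B > 0`,
depending only on `ε` and `p`, such that for every positive Borel measure `μ` on `𝔻`:
`Σ_{n,k} h(μ(W(I_{n,k}))/|I_{n,k}|) ≤ Σ_{n,k} h(B·μ(R(I_{n,k}))/|I_{n,k}|)`. -/
theorem window_to_inner_half_sum
    (ε p : ℝ) (hε : ε ∈ Set.Ioo (0:ℝ) 1) (hp : 1 ≤ p) :
    ∃ B : ℝ, 0 < B ∧
      ∀ h : ℝ → ℝ, MonotoneOn h (Set.Ici 0) → h 0 = 0 → (∀ t ∈ Set.Ici (0:ℝ), 0 ≤ h t) →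
        ConcaveOn ℝ (Set.Ici 0) (fun t => h (t ^ ε)) →
        ConvexOn ℝ (Set.Ici 0) (fun t => h (t ^ p)) →
        ∀ μ : Measure ℂ, μ unitDiscᶜ = 0 →
          (∑' q : dyadicSet,
              ENNReal.ofReal (h ((μ (Wwin (q : ℕ × ℕ).1 (q : ℕ × ℕ).2)).toReal /
                arcLen (q : ℕ × ℕ).1))) ≤
            ∑' q : dyadicSet,
              ENNReal.ofReal (h (B * (μ (Rwin (q : ℕ × ℕ).1 (q : ℕ × ℕ).2)).toReal /
                arcLen (q : ℕ × ℕ).1)) := by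
  obtain ⟨hε0, hε1⟩ := hε
  obtain ⟨τ, η, hτ0, hτ, hη0, hη1, hτη⟩ := exists_dyadic_exponents hε0 hε1
  have hp0 : 0 < p := one_pos.trans_le hp
  have hc : 0 < 1 - 2 * τ := sub_pos.2 hτ
  have hA : 0 < (1 - η ^ p⁻¹)⁻¹ :=
    inv_pos.2 (sub_pos.2 (Real.rpow_lt_one hη0.le hη1 (inv_pos.2 hp0)))
  set c := 1 - 2 * τ
  refine ⟨(1 - η ^ p⁻¹)⁻¹ ^ p * c ^ (ε - 1),
    mul_pos (Real.rpow_pos_of_pos hA p) (Real.rpow_pos_of_pos hc _), ?_⟩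
  intro h hmono h0 _ hconc hconv μ _
  have hW := tsum_dyadicSet_eq (fun n k => ENNReal.ofReal (h ((μ (Wwin n k)).toReal / arcLen n)))
    fun n k => by rw [Wwin_mod (Nat.le_add_left 1 n)]
  have hR := tsum_dyadicSet_eq (fun n k => ENNReal.ofReal
      (h ((1 - η ^ p⁻¹)⁻¹ ^ p * c ^ (ε - 1) * (μ (Rwin n k)).toReal / arcLen n)))
    fun n k => by rw [Rwin_mod (Nat.le_add_left 1 n)]
  refine (hW.trans_le ?_).trans_eq hR.symm
  calc _ ≤ ∑' n, ∑ k ∈ Finset.range (2 ^ (n + 1)), ∑' q : Σ d, Fin (2 ^ d),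
        ENNReal.ofReal (h (η ^ q.1 * (c ^ (ε - 1) *
          (μ (Rwin (n + 1 + q.1) (2 ^ q.1 * k + q.2))).toReal / arcLen (n + 1 + q.1)))) :=
        ENNReal.tsum_le_tsum fun n => Finset.sum_le_sum fun k hk =>
          ofReal_map_Wwin_le_tsum_Rwin hε0 hε1 hmono h0 hconc hτ0 hτ hη0.le hτη μ (by omega)
            (Finset.mem_range.1 hk)
    _ = ∑' m, ∑ j ∈ Finset.range (2 ^ (m + 1)), ∑ d ∈ Finset.range (m + 1),
        ENNReal.ofReal (h (η ^ d * (c ^ (ε - 1) *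
          (μ (Rwin (m + 1) j)).toReal / arcLen (m + 1)))) :=
        tsum_sum_tsum_descendants_eq fun m j d => ENNReal.ofReal (h (η ^ d *
          (c ^ (ε - 1) * (μ (Rwin m j)).toReal / arcLen m)))
    _ ≤ _ := ENNReal.tsum_le_tsum fun m => Finset.sum_le_sum fun j _ =>
        (sum_range_ofReal_le_of_convexOn_rpow hp0 hmono h0 hconv hη0 hη1
          (div_nonneg (mul_nonneg (Real.rpow_nonneg hc.le _) ENNReal.toReal_nonneg)
            (arcLen_pos _).le) _).trans_eq (by ring_nf)
end
end
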